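/- Let H = ⊕_{n≥0} H_n be an orthogonal Hilbert space decomposition and let A be a symmetric operator on the dense domain D of finite vectors (finite sums of elements of the H_n) such that A maps H_n ∩ D into H_{n−1} ⊕ H_n ⊕ H_{n+1} (a Jacobi block structure) and A maps D into D. If moreover there is a constant sequence of bounds ‖A f_n‖ ≤ C(n+1)‖f_n‖ for f_n ∈ H_n ∩ D, then A is essentially self-adjoint on D. -/

import Mathlib

/-!
For `u, v ∈ dom A*` with components `u_k, v_k ∈ H_k`, the truncations `P_N u = u_0 + ⋯ + u_{N-1}`
lie in `D`. Since `A` is block-tridiagonal, the defect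
`⟪A* u, P_{K+1} v⟫ - ⟪P_{K+1} u, A* v⟫` only sees the blocks linking levels `K` and `K + 1`:
it equals `⟪A u_{K+1}, v_K⟫ - ⟪A u_K, v_{K+1}⟫`. By the growth bound this is at most
`C (K + 2) t_K` for a summable sequence `t`, so it is small along a subsequence, while it converges
to `⟪A* u, v⟫ - ⟪u, A* v⟫`. Hence `A*` is symmetric, and then `A ⊆ A*` forces `A** = A*`.
-/

open InnerProductSpace
open Filter Topology Finset
open scoped LinearPMap

theorem IsHilbertSum.exists_hasSum {𝕜 ι E : Type*} [RCLike 𝕜] [NormedAddCommGroup E]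
    [InnerProductSpace 𝕜 E] [CompleteSpace E] {G : ι → Type*} [∀ i, NormedAddCommGroup (G i)]
    [∀ i, InnerProductSpace 𝕜 (G i)] {V : ∀ i, G i →ₗᵢ[𝕜] E} (hV : IsHilbertSum 𝕜 G V) (x : E) :
    ∃ f : lp G 2, HasSum (fun i => V i (f i)) x := by
  obtain ⟨f, rfl⟩ := hV.surjective_isometry x
  exact ⟨f, hV.OrthogonalFamily.hasSum_linearIsometry f⟩

theorem inner_eq_inner_sum_of_hasSum {𝕜 ι E : Type*} [RCLike 𝕜] [NormedAddCommGroup E]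
    [InnerProductSpace 𝕜 E] {f : ι → E} {x y : E} (hf : HasSum f x) (s : Finset ι)
    (hs : ∀ i ∉ s, ⟪y, f i⟫_𝕜 = 0) : ⟪y, x⟫_𝕜 = ⟪y, ∑ i ∈ s, f i⟫_𝕜 := by
  rw [inner_sum]
  exact ((innerSL 𝕜 y).hasSum hf).unique (hasSum_sum_of_ne_finset_zero hs)

theorem Summable.frequently_natCast_add_mul_lt {a : ℕ → ℝ} (ha : Summable a) (k : ℕ) {ε : ℝ}
    (hε : 0 < ε) : ∃ᶠ n in atTop, ((n + k : ℕ) : ℝ) * a n < ε := by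
  intro hlarge
  have hharmonic : Summable fun n : ℕ => 1 / ((n + k : ℕ) : ℝ) := by
    refine (ha.div_const ε).of_norm_bounded_eventually_nat ?_
    filter_upwards [hlarge, eventually_gt_atTop 0] with n hn hpos
    have : (0 : ℝ) < (n + k : ℕ) := by positivity
    rw [Real.norm_of_nonneg (by positivity), div_le_div_iff₀ this hε]
    linarith [not_lt.mp hn]
  exact Real.not_summable_one_div_natCast ((summable_nat_add_iff k).mp hharmonic)

namespace LinearPMap

variable {𝕜 H : Type*} [RCLike 𝕜] [NormedAddCommGroup H] [InnerProductSpace 𝕜 H]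

theorem adjoint_le_adjoint_of_le {F : Type*} [NormedAddCommGroup F] [InnerProductSpace 𝕜 F]
    [CompleteSpace H] {S T : H →ₗ.[𝕜] F}
    (hS : Dense (S.domain : Set H)) (hST : S ≤ T) : T† ≤ S† := by
  refine IsFormalAdjoint.le_adjoint hS fun x y => ?_
  rw [(hST.2 rfl : S x = T ⟨x, hST.1 x.2⟩)]
  exact (adjoint_isFormalAdjoint (hS.mono hST.1)).symm ⟨x, hST.1 x.2⟩ y

theorem adjoint_adjoint_eq_adjoint [CompleteSpace H] {T : H →ₗ.[𝕜] H}
    (hT : Dense (T.domain : Set H)) (hsymm : T.IsFormalAdjoint T)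
    (hsymm' : T†.IsFormalAdjoint T†) : T†† = T† := by
  have hle : T ≤ T† := hsymm.le_adjoint hT
  exact le_antisymm (adjoint_le_adjoint_of_le hT hle) (hsymm'.le_adjoint (hT.mono hle.1))

def IsBlockTridiagonal (A : H →ₗ.[𝕜] H) (V : ℕ → Submodule 𝕜 H) : Prop :=
  ∀ n (x : A.domain), (x : H) ∈ V n → A x ∈ V (n - 1) ⊔ V n ⊔ V (n + 1)

variable {V : ℕ → Submodule 𝕜 H} {A : H →ₗ.[𝕜] H}

theorem IsBlockTridiagonal.inner_apply_eq_zero (hA : A.IsBlockTridiagonal V)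
    (hV : OrthogonalFamily 𝕜 (fun n => V n) fun n => (V n).subtypeₗᵢ) {m n : ℕ}
    (hmn : m + 1 < n ∨ n + 1 < m) {x : A.domain} (hx : (x : H) ∈ V m) {y : H} (hy : y ∈ V n) :
    ⟪A x, y⟫_𝕜 = 0 := by
  have hblock : V (m - 1) ⊔ V m ⊔ V (m + 1) ≤ (V n)ᗮ :=
    sup_le (sup_le (hV.isOrtho (by omega)) (hV.isOrtho (by omega))) (hV.isOrtho (by omega))
  exact Submodule.inner_left_of_mem_orthogonal hy (hblock (hA m x hx))

theorem norm_inner_apply_le {C : ℝ}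
    (hbound : ∀ n (x : A.domain), (x : H) ∈ V n → ‖A x‖ ≤ C * (n + 1) * ‖(x : H)‖) {n : ℕ}
    {x : A.domain} (hx : (x : H) ∈ V n) (y : H) :
    ‖⟪A x, y⟫_𝕜‖ ≤ C * (n + 1) * (‖(x : H)‖ * ‖y‖) := by
  rw [← mul_assoc]
  exact (norm_inner_le_norm _ _).trans (mul_le_mul_of_nonneg_right (hbound n x hx) (norm_nonneg y))

def partialSum (hVA : ∀ n, V n ≤ A.domain) (f : ∀ n, V n) (N : ℕ) : A.domain :=
  ∑ k ∈ range N, Submodule.inclusion (hVA k) (f k)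

section PartialSum

variable {hVA : ∀ n, V n ≤ A.domain}

@[simp]
theorem coe_partialSum (f : ∀ n, V n) (N : ℕ) :
    (partialSum hVA f N : H) = ∑ k ∈ range N, (f k : H) := by
  simp [partialSum]

theorem apply_partialSum (f : ∀ n, V n) (N : ℕ) :
    A (partialSum hVA f N) = ∑ k ∈ range N, A (Submodule.inclusion (hVA k) (f k)) :=
  map_sum A.toFun _ _

theorem partialSum_succ (f : ∀ n, V n) (N : ℕ) :
    partialSum hVA f (N + 1) = partialSum hVA f N + Submodule.inclusion (hVA N) (f N) :=
  sum_range_succ _ _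

theorem IsBlockTridiagonal.inner_apply_partialSum_eq_zero (hA : A.IsBlockTridiagonal V)
    (hV : OrthogonalFamily 𝕜 (fun n => V n) fun n => (V n).subtypeₗᵢ) (f : ∀ n, V n) {N n : ℕ}
    (hNn : N < n) {y : H} (hy : y ∈ V n) : ⟪A (partialSum hVA f N), y⟫_𝕜 = 0 := by
  rw [apply_partialSum, sum_inner]
  refine sum_eq_zero fun k hk => hA.inner_apply_eq_zero hV ?_ (f k).2 hy
  simp only [mem_range] at hk
  omega

theorem IsBlockTridiagonal.inner_apply_coe_partialSum_eq_zero (hA : A.IsBlockTridiagonal V)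
    (hV : OrthogonalFamily 𝕜 (fun n => V n) fun n => (V n).subtypeₗᵢ) (g : ∀ n, V n) {N m : ℕ}
    (hNm : N < m) {x : A.domain} (hx : (x : H) ∈ V m) :
    ⟪A x, (partialSum hVA g N : H)⟫_𝕜 = 0 := by
  rw [coe_partialSum, inner_sum]
  refine sum_eq_zero fun k hk => hA.inner_apply_eq_zero hV ?_ hx (g k).2
  simp only [mem_range] at hk
  omega

theorem norm_inner_apply_sub_inner_apply_le {C : ℝ} (hC : 0 ≤ C)
    (hbound : ∀ n (x : A.domain), (x : H) ∈ V n → ‖A x‖ ≤ C * (n + 1) * ‖(x : H)‖)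
    (f g : ∀ n, V n) (K : ℕ) :
    ‖⟪A (Submodule.inclusion (hVA (K + 1)) (f (K + 1))), (g K : H)⟫_𝕜 -
        ⟪A (Submodule.inclusion (hVA K) (f K)), (g (K + 1) : H)⟫_𝕜‖ ≤
      C * ((K + 2 : ℕ) : ℝ) * ((‖f K‖ ^ 2 + ‖g K‖ ^ 2) + (‖f (K + 1)‖ ^ 2 + ‖g (K + 1)‖ ^ 2)) := by
  have hupper := norm_inner_apply_le hbound
    (x := Submodule.inclusion (hVA (K + 1)) (f (K + 1))) (f (K + 1)).2 (g K)
  have hlower := norm_inner_apply_le hbound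
    (x := Submodule.inclusion (hVA K) (f K)) (f K).2 (g (K + 1))
  simp only [Submodule.coe_inclusion, Submodule.norm_coe] at hupper hlower
  have hsq (a b : ℝ) : a * b ≤ a ^ 2 + b ^ 2 := by nlinarith [sq_nonneg (a - b)]
  calc _ ≤ _ := norm_sub_le _ _
    _ ≤ C * ((K + 2 : ℕ) : ℝ) * (‖f (K + 1)‖ * ‖g K‖ + ‖f K‖ * ‖g (K + 1)‖) := by
      push_cast at hupper hlower ⊢
      nlinarith [mul_nonneg hC (mul_nonneg (norm_nonneg (f K)) (norm_nonneg (g (K + 1))))]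
    _ ≤ _ := by
      refine mul_le_mul_of_nonneg_left ?_ (by positivity)
      linarith [hsq ‖f (K + 1)‖ ‖g K‖, hsq ‖f K‖ ‖g (K + 1)‖]

theorem IsBlockTridiagonal.inner_partialSum_adjoint [CompleteSpace H]
    (hA : A.IsBlockTridiagonal V) (hV : OrthogonalFamily 𝕜 (fun n => V n) fun n => (V n).subtypeₗᵢ)
    (hdense : Dense (A.domain : Set H)) (f : ∀ n, V n) {g : ∀ n, V n} {v : A†.domain}
    (hg : HasSum (fun n => (g n : H)) v) (N : ℕ) :
    ⟪(partialSum hVA f N : H), A† v⟫_𝕜 =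
      ⟪A (partialSum hVA f N), (partialSum hVA g (N + 1) : H)⟫_𝕜 := by
  rw [← (adjoint_isFormalAdjoint hdense).symm, coe_partialSum]
  refine inner_eq_inner_sum_of_hasSum hg _ fun m hm => ?_
  exact hA.inner_apply_partialSum_eq_zero hV f (by simpa using hm) (g m).2

theorem IsBlockTridiagonal.inner_adjoint_partialSum_sub [CompleteSpace H]
    (hA : A.IsBlockTridiagonal V) (hV : OrthogonalFamily 𝕜 (fun n => V n) fun n => (V n).subtypeₗᵢ)
    (hdense : Dense (A.domain : Set H)) (hsymm : A.IsFormalAdjoint A) {f g : ∀ n, V n}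
    {u v : A†.domain} (hf : HasSum (fun n => (f n : H)) u) (hg : HasSum (fun n => (g n : H)) v)
    (K : ℕ) :
    ⟪A† u, (partialSum hVA g (K + 1) : H)⟫_𝕜 - ⟪(partialSum hVA f (K + 1) : H), A† v⟫_𝕜 =
      ⟪A (Submodule.inclusion (hVA (K + 1)) (f (K + 1))), (g K : H)⟫_𝕜 -
        ⟪A (Submodule.inclusion (hVA K) (f K)), (g (K + 1) : H)⟫_𝕜 := by
  have hu : ⟪A† u, (partialSum hVA g (K + 1) : H)⟫_𝕜 =
      ⟪A (partialSum hVA f (K + 1 + 1)), (partialSum hVA g (K + 1) : H)⟫_𝕜 := by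
    rw [← inner_conj_symm, hA.inner_partialSum_adjoint hV hdense g hf, inner_conj_symm, hsymm]
  have hlow : ⟪A (Submodule.inclusion (hVA (K + 1)) (f (K + 1))),
      (partialSum hVA g (K + 1) : H)⟫_𝕜 =
        ⟪A (Submodule.inclusion (hVA (K + 1)) (f (K + 1))), (g K : H)⟫_𝕜 := by
    rw [partialSum_succ, Submodule.coe_add, inner_add_right,
      hA.inner_apply_coe_partialSum_eq_zero hV g (Nat.lt_succ_self K) (f (K + 1)).2, zero_add]
    rfl
  have hhigh : ⟪A (partialSum hVA f (K + 1)), (g (K + 1) : H)⟫_𝕜 =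
      ⟪A (Submodule.inclusion (hVA K) (f K)), (g (K + 1) : H)⟫_𝕜 := by
    rw [partialSum_succ, map_add, inner_add_left,
      hA.inner_apply_partialSum_eq_zero hV f (Nat.lt_succ_self K) (g (K + 1)).2, zero_add]
  rw [hu, hA.inner_partialSum_adjoint hV hdense f hg, ← hlow, ← hhigh, partialSum_succ f (K + 1),
    partialSum_succ g (K + 1), map_add, Submodule.coe_add, inner_add_left, inner_add_right]
  simp only [Submodule.coe_inclusion]
  ring

end PartialSum

theorem IsBlockTridiagonal.isFormalAdjoint_adjoint [CompleteSpace H] (hA : A.IsBlockTridiagonal V)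
    (hV : IsHilbertSum 𝕜 (fun n => V n) fun n => (V n).subtypeₗᵢ) (hVA : ∀ n, V n ≤ A.domain)
    (hdense : Dense (A.domain : Set H)) (hsymm : A.IsFormalAdjoint A) {C : ℝ} (hC : 0 < C)
    (hbound : ∀ n (x : A.domain), (x : H) ∈ V n → ‖A x‖ ≤ C * (n + 1) * ‖(x : H)‖) :
    A†.IsFormalAdjoint A† := by
  intro u v
  obtain ⟨f, hf⟩ := hV.exists_hasSum (u : H)
  obtain ⟨g, hg⟩ := hV.exists_hasSum (v : H)
  set t : ℕ → ℝ := fun k => ‖f k‖ ^ 2 + ‖g k‖ ^ 2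
  have ht : Summable t :=
    ((hV.OrthogonalFamily.summable_iff_norm_sq_summable f).mp hf.summable).add
      ((hV.OrthogonalFamily.summable_iff_norm_sq_summable g).mp hg.summable)
  set defect : ℕ → 𝕜 := fun K =>
    ⟪A† u, (partialSum hVA g (K + 1) : H)⟫_𝕜 - ⟪(partialSum hVA f (K + 1) : H), A† v⟫_𝕜
  have hP {w : H} {c : ∀ n, V n} (hc : HasSum (fun n => (c n : H)) w) :
      Tendsto (fun K => (partialSum hVA c (K + 1) : H)) atTop (𝓝 w) := by
    simpa using (tendsto_add_atTop_iff_nat 1).mpr hc.tendsto_sum_nat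
  have hlim : Tendsto defect atTop (𝓝 (⟪A† u, (v : H)⟫_𝕜 - ⟪(u : H), A† v⟫_𝕜)) :=
    (tendsto_const_nhds.inner (hP hg)).sub ((hP hf).inner tendsto_const_nhds)
  have hsmall (ε : ℝ) (hε : 0 < ε) : ∃ᶠ K in atTop, ‖defect K‖ ≤ ε := by
    refine ((ht.add ((summable_nat_add_iff 1).mpr ht)).frequently_natCast_add_mul_lt 2
      (div_pos hε hC)).mono fun K hK => ?_
    rw [lt_div_iff₀ hC] at hK
    calc ‖defect K‖ ≤ C * ((K + 2 : ℕ) : ℝ) * (t K + t (K + 1)) := by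
          simp only [defect]
          rw [hA.inner_adjoint_partialSum_sub hV.OrthogonalFamily hdense hsymm hf hg]
          exact norm_inner_apply_sub_inner_apply_le hC.le hbound f g K
      _ ≤ ε := by linarith
  rw [← sub_eq_zero, ← norm_le_zero_iff]
  exact le_of_forall_pos_le_add fun ε hε =>
    (zero_add ε).symm ▸ le_of_tendsto_of_frequently hlim.norm (hsmall ε hε)

end LinearPMap

theorem jacobi_operator_essentially_selfAdjoint_general
    {H : Type*} [NormedAddCommGroup H] [InnerProductSpace ℝ H] [CompleteSpace H]
    (V : ℕ → Submodule ℝ H) (hVclosed : ∀ n, IsClosed (V n : Set H))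
    (hVorth : ∀ m n : ℕ, m ≠ n → ∀ u ∈ V m, ∀ v ∈ V n, ⟪u, v⟫_ℝ = 0)
    (hVdense : Dense ((⨆ n, V n : Submodule ℝ H) : Set H))
    (A : H →ₗ.[ℝ] H)
    (hdom : A.domain = ⨆ n, V n)
    (hsymm : ∀ u v : A.domain, ⟪A u, (v : H)⟫_ℝ = ⟪(u : H), A v⟫_ℝ)
    (hblock : ∀ n : ℕ, ∀ u : A.domain, (u : H) ∈ V n →
      A u ∈ (V (n - 1) ⊔ V n ⊔ V (n + 1) : Submodule ℝ H))
    (C : ℝ) (hC : 0 < C)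
    (hbound : ∀ n : ℕ, ∀ u : A.domain, (u : H) ∈ V n → ‖A u‖ ≤ C * (n + 1) * ‖(u : H)‖) :
    A.adjoint.adjoint = A.adjoint := by
  have (n : ℕ) : CompleteSpace (V n) := (hVclosed n).completeSpace_coe
  have hV : IsHilbertSum ℝ (fun n => V n) fun n => (V n).subtypeₗᵢ :=
    .mkInternal V (fun m n hmn x y => hVorth m n hmn x x.2 y y.2)
      (Submodule.dense_iff_topologicalClosure_eq_top.mp hVdense).ge
  have hdense : Dense (A.domain : Set H) := hdom ▸ hVdense
  have hVA (n : ℕ) : V n ≤ A.domain := hdom ▸ le_iSup V n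
  exact LinearPMap.adjoint_adjoint_eq_adjoint hdense hsymm
    (LinearPMap.IsBlockTridiagonal.isFormalAdjoint_adjoint hblock hV hVA hdense hsymm hC hbound)

/-- A symmetric operator with Jacobi (block-tridiagonal) structure relative to an
orthogonal decomposition `H = ⊕ₙ Hₙ` and linear growth bound `‖A fₙ‖ ≤ C(n+1)‖fₙ‖`
is essentially self-adjoint on the finite vectors, i.e. `A** = A*`. -/
theorem jacobi_operator_essentially_selfAdjoint
    {H : Type*} [NormedAddCommGroup H] [InnerProductSpace ℝ H] [CompleteSpace H]
    (V : ℕ → Submodule ℝ H) (hVclosed : ∀ n, IsClosed (V n : Set H))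
    (hVorth : ∀ m n : ℕ, m ≠ n → ∀ u ∈ V m, ∀ v ∈ V n, ⟪u, v⟫_ℝ = 0)
    (hVdense : Dense ((⨆ n, V n : Submodule ℝ H) : Set H))
    (A : H →ₗ.[ℝ] H)
    (hdom : A.domain = ⨆ n, V n)
    (hsymm : ∀ u v : A.domain, ⟪A u, (v : H)⟫_ℝ = ⟪(u : H), A v⟫_ℝ)
    (hinv : ∀ u : A.domain, A u ∈ (⨆ n, V n : Submodule ℝ H))
    (hblock : ∀ n : ℕ, ∀ u : A.domain, (u : H) ∈ V n →
      A u ∈ (V (n - 1) ⊔ V n ⊔ V (n + 1) : Submodule ℝ H))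
    (C : ℝ) (hC : 0 < C)
    (hbound : ∀ n : ℕ, ∀ u : A.domain, (u : H) ∈ V n → ‖A u‖ ≤ C * (n + 1) * ‖(u : H)‖) :
    A.adjoint.adjoint = A.adjoint :=
  jacobi_operator_essentially_selfAdjoint_general V hVclosed hVorth hVdense A hdom hsymm hblock C hC
    hbound
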